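/- arXiv:0810.4480 — 5 statements merged into one kernel-verified Lean document; each statement's English description precedes it below -/
import Mathlib

section
/- Let A be a normed unital algebra over ℂ, let τ : A → ℂ be a continuous linear functional with the trace property τ(x·y) = τ(y·x) for all x, y ∈ A, and let p : ℝ → A be a differentiable path of idempotents (p(t)·p(t) = p(t) for all t). Then the function t ↦ τ(p(t)) is constant on ℝ: τ(p(s)) = τ(p(t)) for all s, t ∈ ℝ. -/
/-!
Differentiating `p² = p` gives `p' = p' p + p p'`, which forces `p p' p = 0`. A trace sees
`p' p = p' p p` and `p p' = p p p'` as `p p' p`, so `τ (p') = 0` and `t ↦ τ (p t)` has vanishing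
derivative.
-/

theorem IsIdempotentElem.mul_mul_eq_zero_of_eq_mul_add_mul {R : Type*} [Ring R] {e d : R}
    (he : IsIdempotentElem e) (hd : d = d * e + e * d) : e * d * e = 0 := by
  have h : e * d * e = e * d * e + e * d * e :=
    calc e * d * e = e * (d * e + e * d) * e := by rw [← hd]
      _ = e * d * (e * e) + (e * e) * d * e := by noncomm_ring
      _ = e * d * e + e * d * e := by rw [he.eq]
  exact left_eq_add.mp h

theorem IsIdempotentElem.map_eq_zero_of_eq_mul_add_mul {R M F : Type*} [Ring R] [AddCommMonoid M]
    [FunLike F R M] [AddMonoidHomClass F R M] (f : F) (htrace : ∀ x y : R, f (x * y) = f (y * x))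
    {e d : R} (he : IsIdempotentElem e) (hd : d = d * e + e * d) : f d = 0 := by
  have hede := he.mul_mul_eq_zero_of_eq_mul_add_mul hd
  have hright : f (d * e) = 0 := by
    rw [← he.eq, ← mul_assoc, htrace, ← mul_assoc, hede, map_zero]
  have hleft : f (e * d) = 0 := by
    rw [← he.eq, mul_assoc, htrace, hede, map_zero]
  rw [hd, map_add, hright, hleft, add_zero]

theorem HasDerivAt.eq_mul_add_mul_of_isIdempotentElem {𝕜 A : Type*} [NontriviallyNormedField 𝕜]
    [NormedRing A] [NormedAlgebra 𝕜 A] {p : 𝕜 → A} {d : A} {t : 𝕜}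
    (hp : HasDerivAt p d t) (hidem : ∀ t, IsIdempotentElem (p t)) :
    d = d * p t + p t * d := by
  have hsq : HasDerivAt (fun x => p x * p x) (d * p t + p t * d) t := hp.mul hp
  simp only [fun x => (hidem x).eq] at hsq
  exact hp.unique hsq

/-- Let `A` be a normed unital algebra over `ℂ`, `τ : A → ℂ` a continuous
linear functional with the trace property `τ (x * y) = τ (y * x)`, and `p : ℝ → A` a
differentiable path of idempotents.  Then `t ↦ τ (p t)` is constant on `ℝ`. -/
theorem stmt2 {A : Type*} [NormedRing A] [NormedAlgebra ℂ A]
    (τ : A →L[ℂ] ℂ) (htrace : ∀ x y : A, τ (x * y) = τ (y * x))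
    (p : ℝ → A) (hdiff : Differentiable ℝ p)
    (hidem : ∀ t : ℝ, p t * p t = p t) (s t : ℝ) :
    τ (p s) = τ (p t) := by
  have hderiv : ∀ u, HasDerivAt (fun x => τ (p x)) 0 u := by
    intro u
    have hp := (hdiff u).hasDerivAt
    have hτd : τ (deriv p u) = 0 :=
      IsIdempotentElem.map_eq_zero_of_eq_mul_add_mul τ htrace (hidem u)
        (hp.eq_mul_add_mul_of_isIdempotentElem hidem)
    have hτp : HasDerivAt (τ ∘ p) (τ (deriv p u)) u :=
      (τ.restrictScalars ℝ).hasFDerivAt.comp_hasDerivAt u hp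
    rwa [hτd] at hτp
  exact is_const_of_deriv_eq_zero (fun x => (hderiv x).differentiableAt)
    (fun x => (hderiv x).deriv) s t
end

section
/- Let A be a unital algebra over ℂ, n ∈ ℕ, and let τ : A^{2n+1} → ℂ be a (2n+1)-multilinear cyclic cocycle. Let p ∈ A be an idempotent (p·p = p) and let a ∈ A be arbitrary. Then τ(a·p − p·a, p, …, p) = 0, and consequently the 'Lie derivative' sum Σ_{i=0}^{2n} τ(p, …, p, a·p − p·a, p, …, p) (with the commutator a·p − p·a placed in the i-th slot) vanishes. -/
/-- The Hochschild coboundary of a `(2n+1)`-multilinear functional `τ : A^{2n+1} → ℂ`: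
`(bτ)(a₀, …, a_{2n+1}) = Σ_{i=0}^{2n} (−1)^i τ(a₀, …, aᵢ·a_{i+1}, …, a_{2n+1})
  + (−1)^{2n+1} τ(a_{2n+1}·a₀, a₁, …, a_{2n})`. -/
noncomputable def hochschildCoboundary {A : Type*} [Ring A] (n : ℕ)
    (τ : (Fin (2 * n + 1) → A) → ℂ) (a : Fin (2 * n + 1 + 1) → A) : ℂ :=
  (∑ i : Fin (2 * n + 1), (-1 : ℂ) ^ (i : ℕ) *
      τ (fun j => if (j : ℕ) < (i : ℕ) then a j.castSucc
          else if (j : ℕ) = (i : ℕ) then a i.castSucc * a i.succ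
          else a j.succ)) +
    (-1 : ℂ) ^ (2 * n + 1) *
      τ (fun j => if (j : ℕ) = 0 then a (Fin.last (2 * n + 1)) * a 0 else a j.castSucc)

/-! Feed the vector `(a, p, …, p)` to the cocycle identity `bτ = 0`. Since `p² = p`, every face
except the first and the last is `(a, p, …, p)`, and these enter with alternating signs that cancel
(there are `2n` of them), leaving `τ(ap, p, …, p) − τ(pa, p, …, p) = 0`. Cyclicity then moves the
commutator to any slot, so every term of the sum vanishes as well. -/

open Function

section Faces

variable {A : Type*} [Ring A] {m : ℕ} {p a : A}

theorem hochschildFace_zero_update_const :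
    (fun j : Fin (m + 1) =>
        if (j : ℕ) < ((0 : Fin (m + 1)) : ℕ) then update (fun _ => p) 0 a j.castSucc
        else if (j : ℕ) = ((0 : Fin (m + 1)) : ℕ) then
          update (fun _ => p) 0 a (Fin.castSucc (0 : Fin (m + 1))) *
            update (fun _ => p) 0 a (Fin.succ (0 : Fin (m + 1)))
        else update (fun _ : Fin (m + 1 + 1) => p) 0 a j.succ) =
      update (fun _ => p) 0 (a * p) := by
  funext j
  rcases Fin.eq_zero_or_eq_succ j with rfl | ⟨k, rfl⟩ <;> simp

theorem hochschildFace_succ_update_const (hp : p * p = p) (i : Fin m) :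
    (fun j : Fin (m + 1) => if (j : ℕ) < (i.succ : ℕ) then update (fun _ => p) 0 a j.castSucc
        else if (j : ℕ) = (i.succ : ℕ) then
          update (fun _ => p) 0 a i.succ.castSucc * update (fun _ => p) 0 a i.succ.succ
        else update (fun _ : Fin (m + 1 + 1) => p) 0 a j.succ) =
      update (fun _ => p) 0 a := by
  funext j
  rcases Fin.eq_zero_or_eq_succ j with rfl | ⟨k, rfl⟩ <;> simp [hp]

theorem hochschildFace_last_update_const :
    (fun j : Fin (m + 1) => if (j : ℕ) = 0 then
        update (fun _ => p) 0 a (Fin.last (m + 1)) * update (fun _ : Fin (m + 1 + 1) => p) 0 a 0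
        else update (fun _ => p) 0 a j.castSucc) =
      update (fun _ => p) 0 (p * a) := by
  funext j
  rcases Fin.eq_zero_or_eq_succ j with rfl | ⟨k, rfl⟩ <;> simp [Fin.ext_iff]

end Faces

theorem sum_neg_one_pow_succ_fin_two_mul (n : ℕ) :
    ∑ i : Fin (2 * n), (-1 : ℂ) ^ ((i.succ : Fin (2 * n + 1)) : ℕ) = 0 := by
  simp only [Fin.val_succ, pow_succ, ← Finset.sum_mul,
    Fin.sum_univ_eq_sum_range (fun i => (-1 : ℂ) ^ i), neg_one_geom_sum, even_two_mul, if_true,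
    zero_mul]

theorem hochschildCoboundary_update_const_of_idempotent {A : Type*} [Ring A] (n : ℕ)
    (τ : (Fin (2 * n + 1) → A) → ℂ) {p : A} (hp : p * p = p) (a : A) :
    hochschildCoboundary n τ (update (fun _ => p) 0 a) =
      τ (update (fun _ => p) 0 (a * p)) - τ (update (fun _ => p) 0 (p * a)) := by
  have hodd : (-1 : ℂ) ^ (2 * n + 1) = -1 := Odd.neg_one_pow ⟨n, rfl⟩
  rw [hochschildCoboundary, Fin.sum_univ_succ, hochschildFace_zero_update_const,
    hochschildFace_last_update_const]
  simp only [Fin.val_zero, pow_zero, one_mul,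
    hochschildFace_succ_update_const hp, ← Finset.sum_mul, sum_neg_one_pow_succ_fin_two_mul, hodd]
  ring

theorem apply_update_const_eq_of_cyclic {A B : Type*} {m : ℕ} (f : (Fin (m + 1) → A) → B)
    (hf : ∀ x, f (fun i => x (i - 1)) = f x) (p b : A) (i : Fin (m + 1)) :
    f (update (fun _ => p) i b) = f (update (fun _ => p) 0 b) := by
  induction i using Fin.induction with
  | zero => rfl
  | succ i ih =>
    rw [← ih, ← hf (update _ i.castSucc b), ← Fin.coeSucc_eq_succ]
    exact congrArg f (update_comp_equiv (fun _ => p) (Equiv.subRight 1) i.castSucc b).symm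

/-- Let `A` be a unital algebra over `ℂ`, `τ` a `(2n+1)`-multilinear cyclic
cocycle, `p ∈ A` an idempotent and `a ∈ A` arbitrary.  Then `τ(a·p − p·a, p, …, p) = 0`, and
consequently the "Lie derivative" sum `Σᵢ τ(p, …, a·p − p·a, …, p)` (commutator in the
`i`-th slot) vanishes. -/
theorem stmt5 {A : Type*} [Ring A] [Algebra ℂ A] (n : ℕ)
    (τ : MultilinearMap ℂ (fun _ : Fin (2 * n + 1) => A) ℂ)
    (hcyclic : ∀ a : Fin (2 * n + 1) → A, τ (fun i => a (i - 1)) = τ a)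
    (hcocycle : ∀ a : Fin (2 * n + 1 + 1) → A,
      hochschildCoboundary n (fun v => τ v) a = 0)
    (p a : A) (hp : p * p = p) :
    τ (Function.update (fun _ : Fin (2 * n + 1) => p) 0 (a * p - p * a)) = 0 ∧
    ∑ i : Fin (2 * n + 1),
      τ (Function.update (fun _ : Fin (2 * n + 1) => p) i (a * p - p * a)) = 0 := by
  have hcomm : τ (update (fun _ => p) 0 (a * p - p * a)) = 0 := by
    rw [τ.map_update_sub, ← hochschildCoboundary_update_const_of_idempotent n _ hp a]
    exact hcocycle _
  refine ⟨hcomm, ?_⟩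
  simp only [apply_update_const_eq_of_cyclic τ hcyclic, hcomm, Finset.sum_const_zero]
end

section
/- Fix p, q ∈ ℕ. Let U, U' ⊆ ℝ^p × ℝ^q be open sets, V = U ∩ (ℝ^p × {0}), V' = U' ∩ (ℝ^p × {0}), and let F : U → U' be a C^∞ diffeomorphism with F(V) = V'. Let F̃ : Ω_V^U → Ω_{V'}^{U'} be the induced map, defined by F̃(x, ξ, t) = (F₁(x, tξ), t⁻¹·F₂(x, tξ), t) for t ≠ 0 and F̃(x, ξ, 0) = (F₁(x, 0), D_ξF₂(x, 0)·ξ, 0), and let G̃ : Ω_{V'}^{U'} → Ω_V^U be the map induced in the same way by G = F⁻¹. Then F̃ is a bijection from Ω_V^U onto Ω_{V'}^{U'} with inverse G̃. -/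
open Set ContinuousLinearMap




/-- `Ω_V^U = {(x, ξ, t) ∈ ℝ^p × ℝ^q × ℝ : (x, tξ) ∈ U}`. -/
def OmegaSet {p q : ℕ}
    (U : Set (EuclideanSpace ℝ (Fin p) × EuclideanSpace ℝ (Fin q))) :
    Set (EuclideanSpace ℝ (Fin p) × EuclideanSpace ℝ (Fin q) × ℝ) :=
  {z | (z.1, z.2.2 • z.2.1) ∈ U}

/-- The map `F̃` induced on `Ω_V^U` by `F = (F₁, F₂) : U → U'`:
`F̃(x, ξ, t) = (F₁(x, tξ), t⁻¹·F₂(x, tξ), t)` for `t ≠ 0`, and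
`F̃(x, ξ, 0) = (F₁(x, 0), D_ξF₂(x, 0)·ξ, 0)`, where `D_ξF₂(x, 0)` is the partial
derivative of `F₂` at `(x, 0)` in the `ℝ^q`-directions. -/
noncomputable def inducedMap {p q : ℕ}
    (F : EuclideanSpace ℝ (Fin p) × EuclideanSpace ℝ (Fin q) →
      EuclideanSpace ℝ (Fin p) × EuclideanSpace ℝ (Fin q)) :
    EuclideanSpace ℝ (Fin p) × EuclideanSpace ℝ (Fin q) × ℝ →
      EuclideanSpace ℝ (Fin p) × EuclideanSpace ℝ (Fin q) × ℝ :=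
  fun z =>
    if z.2.2 = 0 then
      ((F (z.1, 0)).1,
        fderiv ℝ (fun η : EuclideanSpace ℝ (Fin q) => (F (z.1, η)).2) 0 z.2.1, 0)
    else
      ((F (z.1, z.2.2 • z.2.1)).1, z.2.2⁻¹ • (F (z.1, z.2.2 • z.2.1)).2, z.2.2)



section aux

variable {E F' : Type*} [NormedAddCommGroup E] [NormedSpace ℝ E]
  [NormedAddCommGroup F'] [NormedSpace ℝ F']

/-- The partial derivative of `η ↦ (H (x, η)).2` at `0` as a composition with the full
derivative. -/
private lemma partialDeriv_hasFDerivAt (H : E × F' → E × F') (x : E)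
    (hH : DifferentiableAt ℝ H (x, 0)) :
    HasFDerivAt (fun η : F' => (H (x, η)).2)
      ((ContinuousLinearMap.snd ℝ E F').comp
        ((fderiv ℝ H (x, 0)).comp (ContinuousLinearMap.inr ℝ E F'))) 0 := by
  have h1 : HasFDerivAt (fun η : F' => (x, η)) (ContinuousLinearMap.inr ℝ E F') 0 :=
    hasFDerivAt_prodMk_right x 0
  have h2 : HasFDerivAt H (fderiv ℝ H (x, 0)) (x, 0) := hH.hasFDerivAt
  exact (ContinuousLinearMap.snd ℝ E F').hasFDerivAt.comp _ (h2.comp _ h1)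

/-- If `H` preserves the slice `{z | z.2 = 0}` on an open set `W ∋ (x,0)`, then the
derivative of `H` at `(x,0)` applied to a horizontal vector has vanishing second
component. -/
private lemma slice_fderiv (H : E × F' → E × F') (W : Set (E × F')) (hW : IsOpen W)
    (x : E) (hx : (x, (0 : F')) ∈ W) (hH : DifferentiableAt ℝ H (x, 0))
    (hsl : ∀ z ∈ W, z.2 = 0 → (H z).2 = 0) (v : E) :
    (fderiv ℝ H (x, 0) (v, 0)).2 = 0 := by
  set φ : E → F' := fun x' => (H (x', 0)).2 with hφ
  have h1 : HasFDerivAt (fun x' : E => (x', (0 : F'))) (ContinuousLinearMap.inl ℝ E F') x :=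
    hasFDerivAt_prodMk_left x 0
  have hinner : HasFDerivAt (fun x' : E => H (x', 0))
      ((fderiv ℝ H (x, 0)).comp (ContinuousLinearMap.inl ℝ E F')) x :=
    hH.hasFDerivAt.comp x h1
  have h2 : HasFDerivAt φ
      ((ContinuousLinearMap.snd ℝ E F').comp
        ((fderiv ℝ H (x, 0)).comp (ContinuousLinearMap.inl ℝ E F'))) x :=
    (ContinuousLinearMap.snd ℝ E F').hasFDerivAt.comp x hinner
  have hev : φ =ᶠ[nhds x] fun _ => (0 : F') := by
    have hopen : IsOpen {x' : E | (x', (0 : F')) ∈ W} :=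
      hW.preimage (Continuous.prodMk continuous_id continuous_const)
    filter_upwards [hopen.mem_nhds hx] with x' hx'
    exact hsl _ hx' rfl
  have hzero : fderiv ℝ φ x = 0 := by
    rw [hev.fderiv_eq, fderiv_fun_const]
    rfl
  have := h2.fderiv
  rw [hzero] at this
  have := congrArg (fun (L : E →L[ℝ] F') => L v) this.symm
  simpa using this

end aux

section main

variable {p q : ℕ}

private lemma half
    (U U' : Set (EuclideanSpace ℝ (Fin p) × EuclideanSpace ℝ (Fin q)))
    (hU : IsOpen U) (hU' : IsOpen U')
    (F G : EuclideanSpace ℝ (Fin p) × EuclideanSpace ℝ (Fin q) →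
      EuclideanSpace ℝ (Fin p) × EuclideanSpace ℝ (Fin q))
    (hF : ContDiffOn ℝ (⊤ : ℕ∞) F U) (hG : ContDiffOn ℝ (⊤ : ℕ∞) G U')
    (hFU : ∀ z ∈ U, F z ∈ U')
    (hGF : ∀ z ∈ U, G (F z) = z)
    (hFslice : ∀ z ∈ U, z.2 = 0 → (F z).2 = 0)
    (hGslice : ∀ z ∈ U', z.2 = 0 → (G z).2 = 0) :
    Set.MapsTo (inducedMap F) (OmegaSet U) (OmegaSet U') ∧
    (∀ z ∈ OmegaSet U, inducedMap G (inducedMap F z) = z) := by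
  constructor
  · rintro ⟨x, ξ, t⟩ hz
    by_cases ht : t = 0
    · subst ht
      have hxU : (x, (0 : EuclideanSpace ℝ (Fin q))) ∈ U := by
        simpa [OmegaSet] using hz
      have hyU' : F (x, 0) ∈ U' := hFU _ hxU
      have hy2 : (F (x, 0)).2 = 0 := hFslice _ hxU rfl
      have hF0 : inducedMap F (x, ξ, (0:ℝ)) =
          ((F (x, 0)).1, fderiv ℝ (fun η => (F (x, η)).2) 0 ξ, 0) := by
        simp [inducedMap]
      have hmem : inducedMap F (x, ξ, (0:ℝ)) ∈ OmegaSet U' := by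
        rw [hF0]
        show ((F (x, 0)).1, (0:ℝ) • fderiv ℝ (fun η => (F (x, η)).2) 0 ξ) ∈ U'
        rw [zero_smul]
        have heq : ((F (x, 0)).1, (0 : EuclideanSpace ℝ (Fin q))) = F (x, 0) :=
          Prod.ext rfl hy2.symm
        rw [heq]; exact hyU'
      exact hmem
    · have hxU : (x, t • ξ) ∈ U := hz
      simp only [OmegaSet, inducedMap, mem_setOf_eq, if_neg ht, smul_inv_smul₀ ht]
      rw [Prod.mk.eta]
      exact hFU _ hxU
  · rintro ⟨x, ξ, t⟩ hz
    by_cases ht : t = 0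
    · subst ht
      have hxU : (x, (0 : EuclideanSpace ℝ (Fin q))) ∈ U := by
        simpa [OmegaSet] using hz
      have hdF : DifferentiableAt ℝ F (x, 0) :=
        (hF.differentiableOn (by simp)).differentiableAt (hU.mem_nhds hxU)
      set y := F (x, 0) with hy
      have hyU' : y ∈ U' := hFU _ hxU
      have hy2 : y.2 = 0 := hFslice _ hxU rfl
      have hyeq : (y.1, (0 : EuclideanSpace ℝ (Fin q))) = y := Prod.ext rfl hy2.symm
      have hdG : DifferentiableAt ℝ G y :=
        (hG.differentiableOn (by simp)).differentiableAt (hU'.mem_nhds hyU')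
      set A := fderiv ℝ F (x, 0) with hA
      set B := fderiv ℝ G y with hB
      -- chain rule: B ∘ A = id
      have hchain : ∀ w, B (A w) = w := by
        have hev : (fun w => G (F w)) =ᶠ[nhds (x, 0)] id := by
          filter_upwards [hU.mem_nhds hxU] with w hw
          exact hGF w hw
        have h1 : fderiv ℝ (fun w => G (F w)) (x, 0) = B.comp A := fderiv_comp _ hdG hdF
        have h2 : fderiv ℝ (fun w => G (F w)) (x, 0) = ContinuousLinearMap.id ℝ _ := by
          rw [hev.fderiv_eq, fderiv_id]
        intro w
        have := congrArg (fun L : _ →L[ℝ] _ => L w) (h1.symm.trans h2)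
        simpa using this
      have hGslice' : ∀ v, (B (v, 0)).2 = 0 := by
        intro v
        have := slice_fderiv G U' hU' y.1 (hyeq ▸ hyU') (hyeq ▸ hdG) hGslice v
        rwa [hyeq] at this
      -- partial derivatives
      have hDF : fderiv ℝ (fun η => (F (x, η)).2) 0 =
          (ContinuousLinearMap.snd ℝ _ _).comp (A.comp (ContinuousLinearMap.inr ℝ _ _)) :=
        (partialDeriv_hasFDerivAt F x hdF).fderiv
      have hDG : fderiv ℝ (fun η => (G (y.1, η)).2) 0 =
          (ContinuousLinearMap.snd ℝ _ _).comp (B.comp (ContinuousLinearMap.inr ℝ _ _)) := by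
        have := (partialDeriv_hasFDerivAt G y.1 (hyeq ▸ hdG)).fderiv
        rwa [hyeq] at this
      -- the key computation for the second component
      have hkey : (B (0, (A (0, ξ)).2)).2 = ξ := by
        have hsplit : A (0, ξ) = ((A (0, ξ)).1, (0 : EuclideanSpace ℝ (Fin q)))
            + ((0 : EuclideanSpace ℝ (Fin p)), (A (0, ξ)).2) := by
          rw [Prod.mk_add_mk, add_zero, zero_add, Prod.mk.eta]
        have h1 : B (A (0, ξ)) = (0, ξ) := hchain _
        rw [hsplit, map_add] at h1
        have h2 := congrArg Prod.snd h1
        simp only [Prod.snd_add, hGslice', zero_add] at h2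
        exact h2
      -- now compute the composite
      have hF0 : inducedMap F (x, ξ, (0:ℝ)) =
          (y.1, fderiv ℝ (fun η => (F (x, η)).2) 0 ξ, 0) := by
        simp [inducedMap, hy]
      rw [hF0]
      have hG0 : inducedMap G (y.1, fderiv ℝ (fun η => (F (x, η)).2) 0 ξ, (0:ℝ)) =
          ((G (y.1, 0)).1,
            fderiv ℝ (fun η => (G (y.1, η)).2) 0 (fderiv ℝ (fun η => (F (x, η)).2) 0 ξ), 0) := by
        simp [inducedMap]
      rw [hG0, hDF, hDG]
      have hGy : G (y.1, 0) = (x, 0) := by rw [hyeq]; exact hGF _ hxU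
      simp only [ContinuousLinearMap.comp_apply, ContinuousLinearMap.inr_apply,
        ContinuousLinearMap.coe_snd', hGy]
      exact congrArg (fun v => (x, v, (0:ℝ))) hkey
    · have hxU : (x, t • ξ) ∈ U := hz
      have h1 : inducedMap F (x, ξ, t) =
          ((F (x, t • ξ)).1, t⁻¹ • (F (x, t • ξ)).2, t) := by
        simp [inducedMap, ht]
      rw [h1]
      have h2 : inducedMap G ((F (x, t • ξ)).1, t⁻¹ • (F (x, t • ξ)).2, t) =
          ((G (F (x, t • ξ))).1, t⁻¹ • (G (F (x, t • ξ))).2, t) := by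
        simp only [inducedMap, if_neg ht, smul_inv_smul₀ ht, Prod.mk.eta]
      rw [h2, hGF _ hxU]
      simp [inv_smul_smul₀ ht]

end main

/-- Let `F : U → U'` be a `C^∞` diffeomorphism with `F(V) = V'` and
inverse `G`.  Then the induced map `F̃` is a bijection from `Ω_V^U` onto `Ω_{V'}^{U'}`
whose inverse is the map `G̃` induced by `G`. -/
theorem stmt8 {p q : ℕ}
    (U U' : Set (EuclideanSpace ℝ (Fin p) × EuclideanSpace ℝ (Fin q)))
    (hU : IsOpen U) (hU' : IsOpen U')
    (F G : EuclideanSpace ℝ (Fin p) × EuclideanSpace ℝ (Fin q) →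
      EuclideanSpace ℝ (Fin p) × EuclideanSpace ℝ (Fin q))
    (hF : ContDiffOn ℝ (⊤ : ℕ∞) F U) (hG : ContDiffOn ℝ (⊤ : ℕ∞) G U')
    (hFU : F '' U = U')
    (hGF : ∀ z ∈ U, G (F z) = z) (hFG : ∀ z ∈ U', F (G z) = z)
    (hFslice : ∀ z ∈ U, z.2 = 0 → (F z).2 = 0)
    (hGslice : ∀ z ∈ U', z.2 = 0 → (G z).2 = 0) :
    Set.BijOn (inducedMap F) (OmegaSet U) (OmegaSet U') ∧
    (∀ z ∈ OmegaSet U, inducedMap G (inducedMap F z) = z) ∧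
    (∀ z ∈ OmegaSet U', inducedMap F (inducedMap G z) = z) := by
  have hFU' : ∀ z ∈ U, F z ∈ U' := fun z hz => hFU ▸ mem_image_of_mem F hz
  have hGU' : ∀ z ∈ U', G z ∈ U := by
    intro z hz
    rw [← hFU] at hz
    obtain ⟨w, hw, rfl⟩ := hz
    rw [hGF w hw]; exact hw
  obtain ⟨hmF, hGFind⟩ := half U U' hU hU' F G hF hG hFU' hGF hFslice hGslice
  obtain ⟨hmG, hFGind⟩ := half U' U hU' hU G F hG hF hGU' hFG hGslice hFslice
  refine ⟨⟨hmF, ?_, ?_⟩, hGFind, hFGind⟩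
  · intro a ha b hb hab
    rw [← hGFind a ha, ← hGFind b hb, hab]
  · intro y hy
    exact ⟨inducedMap G y, hmG hy, hFGind y hy⟩
end

section
/- Fix p, q ∈ ℕ, let U ⊆ ℝ^p × ℝ^q be open with V = U ∩ (ℝ^p × {0}), and let g ∈ 𝒮_c(Ω_V^U). Then: (a) for every x ∈ ℝ^p with (x, 0) ∈ U, the function ξ ↦ g(x, ξ, 0) is a Schwartz function on ℝ^q (it is smooth and all seminorms sup_ξ (1+‖ξ‖²)^k |∂_ξ^α g(x, ξ, 0)| are finite); and (b) the closure of the set {x ∈ ℝ^p : ∃ ξ ∈ ℝ^q with g(x, ξ, 0) ≠ 0} is compact and contained in {x ∈ ℝ^p : (x, 0) ∈ U}. -/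
open Set

/-- A compact `K ⊆ U × ℝ` is a conic compact of `U × ℝ` relative to `V = U ∩ (ℝ^p × {0})`
if `K ∩ (U × {0}) ⊆ V × {0}`. -/
def IsConicCompact {p q : ℕ}
    (U : Set (EuclideanSpace ℝ (Fin p) × EuclideanSpace ℝ (Fin q)))
    (K : Set ((EuclideanSpace ℝ (Fin p) × EuclideanSpace ℝ (Fin q)) × ℝ)) : Prop :=
  IsCompact K ∧ K ⊆ U ×ˢ Set.univ ∧ ∀ w ∈ K, w.2 = 0 → w.1.2 = 0

/-- `g ∈ 𝒮_c(Ω_V^U)`: `g` is smooth on `Ω_V^U`, has compact conic support (there is a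
conic compact `K` of `U × ℝ` relative to `V` such that `g(x, ξ, t) = 0` whenever
`((x, tξ), t) ∉ K`), and all its derivatives on `Ω_V^U` decay rapidly in `ξ`:
for all `k, n` there is `C > 0` with `(1 + ‖ξ‖²)^k ‖D^n g(x, ξ, t)‖ ≤ C` on `Ω_V^U`. -/
def MemSc {p q : ℕ}
    (U : Set (EuclideanSpace ℝ (Fin p) × EuclideanSpace ℝ (Fin q)))
    (g : EuclideanSpace ℝ (Fin p) × EuclideanSpace ℝ (Fin q) × ℝ → ℂ) : Prop :=
  ContDiffOn ℝ (⊤ : ℕ∞) g (OmegaSet U) ∧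
  (∃ K, IsConicCompact U K ∧
    ∀ z ∈ OmegaSet U, ((z.1, z.2.2 • z.2.1), z.2.2) ∉ K → g z = 0) ∧
  ∀ k n : ℕ, ∃ C : ℝ, 0 < C ∧ ∀ z ∈ OmegaSet U,
    (1 + ‖z.2.1‖ ^ 2) ^ k * ‖iteratedFDerivWithin ℝ n g (OmegaSet U) z‖ ≤ C

set_option maxHeartbeats 1000000 in
/-- Let `g ∈ 𝒮_c(Ω_V^U)`.  Then (a) for every `x` with `(x, 0) ∈ U` the
function `ξ ↦ g(x, ξ, 0)` is a Schwartz function on `ℝ^q`, and (b) the closure of the set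
of `x ∈ Ṽ = {x : (x, 0) ∈ U}` at which `ξ ↦ g(x, ξ, 0)` is not identically zero is compact
and contained in `Ṽ`. -/
theorem stmt11 {p q : ℕ}
    (U : Set (EuclideanSpace ℝ (Fin p) × EuclideanSpace ℝ (Fin q)))
    (hU : IsOpen U)
    (g : EuclideanSpace ℝ (Fin p) × EuclideanSpace ℝ (Fin q) × ℝ → ℂ)
    (hg : MemSc U g) :
    (∀ x : EuclideanSpace ℝ (Fin p),
      (x, (0 : EuclideanSpace ℝ (Fin q))) ∈ U →
      ∃ φ : SchwartzMap (EuclideanSpace ℝ (Fin q)) ℂ, ∀ ξ, φ ξ = g (x, ξ, 0)) ∧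
    IsCompact (closure {x : EuclideanSpace ℝ (Fin p) |
        (x, (0 : EuclideanSpace ℝ (Fin q))) ∈ U ∧ ∃ ξ, g (x, ξ, 0) ≠ 0}) ∧
    closure {x : EuclideanSpace ℝ (Fin p) |
        (x, (0 : EuclideanSpace ℝ (Fin q))) ∈ U ∧ ∃ ξ, g (x, ξ, 0) ≠ 0} ⊆
      {x : EuclideanSpace ℝ (Fin p) | (x, (0 : EuclideanSpace ℝ (Fin q))) ∈ U} := by
  classical
  obtain ⟨hsmooth, ⟨K, hKc, hKsupp⟩, hdecay⟩ := hg
  set Ω := OmegaSet U with hΩdef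
  have hΩopen : IsOpen Ω := by
    have hc : Continuous fun z : EuclideanSpace ℝ (Fin p) × EuclideanSpace ℝ (Fin q) × ℝ =>
        (z.1, z.2.2 • z.2.1) := by fun_prop
    have hpre : Ω = (fun z : EuclideanSpace ℝ (Fin p) × EuclideanSpace ℝ (Fin q) × ℝ =>
        (z.1, z.2.2 • z.2.1)) ⁻¹' U := rfl
    rw [hpre]
    exact hU.preimage hc
  -- uniform bounds over all orders up to n
  have key : ∀ k n : ℕ, ∃ C : ℝ, 0 < C ∧ ∀ i ≤ n, ∀ z ∈ Ω,
      (1 + ‖z.2.1‖ ^ 2) ^ k * ‖iteratedFDerivWithin ℝ i g Ω z‖ ≤ C := by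
    intro k n
    induction n with
    | zero =>
      obtain ⟨C, hC0, hC⟩ := hdecay k 0
      exact ⟨C, hC0, fun i hi z hz => by rw [Nat.le_zero.mp hi]; exact hC z hz⟩
    | succ n ih =>
      obtain ⟨C, hC0, hC⟩ := ih
      obtain ⟨C', hC0', hC'⟩ := hdecay k (n + 1)
      refine ⟨max C C', lt_max_of_lt_left hC0, fun i hi z hz => ?_⟩
      rcases Nat.lt_or_ge i (n + 1) with h | h
      · exact le_trans (hC i (Nat.lt_succ_iff.mp h) z hz) (le_max_left _ _)
      · have : i = n + 1 := le_antisymm hi h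
        rw [this]
        exact le_trans (hC' z hz) (le_max_right _ _)
  constructor
  · -- part (a)
    intro x hx
    set A : EuclideanSpace ℝ (Fin q) → EuclideanSpace ℝ (Fin p) × EuclideanSpace ℝ (Fin q) × ℝ := fun ξ => (x, ξ, 0) with hAdef
    set L : EuclideanSpace ℝ (Fin q) →L[ℝ] EuclideanSpace ℝ (Fin p) × EuclideanSpace ℝ (Fin q) × ℝ :=
      ((0 : EuclideanSpace ℝ (Fin q) →L[ℝ] EuclideanSpace ℝ (Fin p)).prod
        ((ContinuousLinearMap.id ℝ (EuclideanSpace ℝ (Fin q))).prod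
          (0 : EuclideanSpace ℝ (Fin q) →L[ℝ] ℝ))) with hLdef
    have hmemΩ : ∀ ξ, A ξ ∈ Ω := fun ξ => by
      simp only [hΩdef, OmegaSet, mem_setOf_eq, hAdef, zero_smul]
      exact hx
    have hmaps : MapsTo A univ Ω := fun ξ _ => hmemΩ ξ
    have hA : ContDiff ℝ (⊤ : WithTop ℕ∞) A := contDiff_const.prodMk (contDiff_id.prodMk contDiff_const)
    have hsm : ContDiff ℝ (⊤ : ℕ∞) (g ∘ A) := by
      rw [← contDiffOn_univ]
      exact (hsmooth.of_le (by simp)).comp ((hA.of_le le_top).contDiffOn) hmaps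
    have hfA : ∀ ξ, HasFDerivAt A L ξ := fun ξ =>
      HasFDerivAt.prodMk (hasFDerivAt_const x ξ) (HasFDerivAt.prodMk (hasFDerivAt_id ξ) (hasFDerivAt_const 0 ξ))
    have hLnorm : ‖L‖ ≤ 1 := L.opNorm_le_bound zero_le_one fun v => by
      simp [hLdef, Prod.norm_def]
    have hDA : ∀ (ξ : EuclideanSpace ℝ (Fin q)) (i : ℕ), 1 ≤ i → ‖iteratedFDeriv ℝ i A ξ‖ ≤ 1 ^ i := by
      intro ξ i hi
      rw [one_pow]
      match i, hi with
      | 1, _ =>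
        have h0 : ‖iteratedFDeriv ℝ 0 (fderiv ℝ A) ξ‖ = ‖iteratedFDeriv ℝ 1 A ξ‖ :=
          norm_iteratedFDeriv_fderiv
        rw [← h0, norm_iteratedFDeriv_zero, (hfA ξ).fderiv]
        exact hLnorm
      | (j + 2), _ =>
        have hfd : fderiv ℝ A = fun _ => L := funext fun y => (hfA y).fderiv
        have h0 : ‖iteratedFDeriv ℝ (j + 1) (fderiv ℝ A) ξ‖ = ‖iteratedFDeriv ℝ (j + 2) A ξ‖ :=
          norm_iteratedFDeriv_fderiv
        rw [← h0, hfd, iteratedFDeriv_succ_const]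
        simp
    refine ⟨⟨g ∘ A, hsm, fun k n => ?_⟩, fun ξ => rfl⟩
    obtain ⟨C, hC0, hC⟩ := key k n
    refine ⟨(n.factorial : ℝ) * C, fun ξ => ?_⟩
    have hw : (0 : ℝ) < (1 + ‖ξ‖ ^ 2) ^ k := by positivity
    have hbound : ‖iteratedFDeriv ℝ n (g ∘ A) ξ‖ ≤ (n.factorial : ℝ) * (C / (1 + ‖ξ‖ ^ 2) ^ k) * 1 ^ n := by
      rw [← iteratedFDerivWithin_univ]
      refine norm_iteratedFDerivWithin_comp_le hsmooth (hA.of_le le_top).contDiffOn (by exact_mod_cast le_top)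
        hΩopen.uniqueDiffOn uniqueDiffOn_univ hmaps (mem_univ ξ) ?_ ?_
      · intro i hi
        rw [le_div_iff₀' hw]
        exact hC i hi (A ξ) (hmemΩ ξ)
      · intro i h1 _
        rw [iteratedFDerivWithin_univ]
        exact hDA ξ i h1
    rw [one_pow, mul_one] at hbound
    calc ‖ξ‖ ^ k * ‖iteratedFDeriv ℝ n (g ∘ A) ξ‖
        ≤ (1 + ‖ξ‖ ^ 2) ^ k * ((n.factorial : ℝ) * (C / (1 + ‖ξ‖ ^ 2) ^ k)) := by
          apply mul_le_mul _ hbound (norm_nonneg _) (le_of_lt hw)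
          exact pow_le_pow_left₀ (norm_nonneg ξ) (by nlinarith [norm_nonneg ξ]) k
      _ = (n.factorial : ℝ) * C := by field_simp
  · -- part (b)
    set S := {x : EuclideanSpace ℝ (Fin p) | (x, (0 : EuclideanSpace ℝ (Fin q))) ∈ U ∧ ∃ ξ, g (x, ξ, 0) ≠ 0} with hSdef
    set T := {x : EuclideanSpace ℝ (Fin p) | ((x, (0 : EuclideanSpace ℝ (Fin q))), (0 : ℝ)) ∈ K} with hTdef
    have hcont : Continuous fun x : EuclideanSpace ℝ (Fin p) => ((x, (0 : EuclideanSpace ℝ (Fin q))), (0 : ℝ)) := by fun_prop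
    have hTclosed : IsClosed T := hKc.1.isClosed.preimage hcont
    obtain ⟨R, hR⟩ := hKc.1.isBounded.subset_closedBall 0
    have hTsub : T ⊆ Metric.closedBall 0 R := by
      intro x hxT
      have := hR hxT
      simp only [Metric.mem_closedBall, dist_zero_right] at this ⊢
      simpa [Prod.norm_def] using this
    have hTcompact : IsCompact T :=
      (isCompact_closedBall (0 : EuclideanSpace ℝ (Fin p)) R).of_isClosed_subset hTclosed hTsub
    have hST : S ⊆ T := by
      rintro x ⟨hxU, ξ, hξ⟩
      by_contra hxK
      apply hξ
      have hzΩ : (x, ξ, 0) ∈ Ω := by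
        simp only [hΩdef, OmegaSet, mem_setOf_eq, zero_smul]
        exact hxU
      refine hKsupp _ hzΩ ?_
      simpa [hTdef, zero_smul] using hxK
    have hclT : closure S ⊆ T := closure_minimal hST hTclosed
    refine ⟨hTcompact.of_isClosed_subset isClosed_closure hclT, ?_⟩
    intro x hxcl
    have : ((x, (0 : EuclideanSpace ℝ (Fin q))), (0 : ℝ)) ∈ K := hclT hxcl
    have := hKc.2.1 this
    simpa using this.1
end

section
/- Fix p, q ∈ ℕ, let U ⊆ ℝ^p × ℝ^q be open with V = U ∩ (ℝ^p × {0}), let g ∈ 𝒮_c(Ω_V^U), and let t₀ ∈ ℝ with t₀ ≠ 0. Then the function (x, ξ) ↦ g(x, ξ, t₀), defined on the open set U_{t₀} := {(x, ξ) ∈ ℝ^p × ℝ^q : (x, t₀·ξ) ∈ U}, is smooth and has compact support: the closure of {(x, ξ) ∈ U_{t₀} : g(x, ξ, t₀) ≠ 0} is a compact subset of U_{t₀}. -/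
open Set

/-- Let `g ∈ 𝒮_c(Ω_V^U)` and `t₀ ≠ 0`.  Then `(x, ξ) ↦ g(x, ξ, t₀)`,
defined on the open set `U_{t₀} = {(x, ξ) : (x, t₀ξ) ∈ U}`, is smooth with compact
support: the closure of its non-vanishing set is a compact subset of `U_{t₀}`. -/
theorem stmt12 {p q : ℕ}
    (U : Set (EuclideanSpace ℝ (Fin p) × EuclideanSpace ℝ (Fin q)))
    (hU : IsOpen U)
    (g : EuclideanSpace ℝ (Fin p) × EuclideanSpace ℝ (Fin q) × ℝ → ℂ)
    (hg : MemSc U g) (t₀ : ℝ) (ht₀ : t₀ ≠ 0) :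
    ContDiffOn ℝ (⊤ : ℕ∞) (fun w : EuclideanSpace ℝ (Fin p) × EuclideanSpace ℝ (Fin q) =>
        g (w.1, w.2, t₀))
      {w : EuclideanSpace ℝ (Fin p) × EuclideanSpace ℝ (Fin q) | (w.1, t₀ • w.2) ∈ U} ∧
    IsCompact (closure {w : EuclideanSpace ℝ (Fin p) × EuclideanSpace ℝ (Fin q) |
        (w.1, t₀ • w.2) ∈ U ∧ g (w.1, w.2, t₀) ≠ 0}) ∧
    closure {w : EuclideanSpace ℝ (Fin p) × EuclideanSpace ℝ (Fin q) |
        (w.1, t₀ • w.2) ∈ U ∧ g (w.1, w.2, t₀) ≠ 0} ⊆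
      {w : EuclideanSpace ℝ (Fin p) × EuclideanSpace ℝ (Fin q) | (w.1, t₀ • w.2) ∈ U} := by
  classical
  obtain ⟨hsmooth, ⟨K, ⟨hKc, hKU, _⟩, hKsupp⟩, _⟩ := hg
  have hmaps : Set.MapsTo
      (fun w : EuclideanSpace ℝ (Fin p) × EuclideanSpace ℝ (Fin q) => (w.1, w.2, t₀))
      {w : EuclideanSpace ℝ (Fin p) × EuclideanSpace ℝ (Fin q) | (w.1, t₀ • w.2) ∈ U}
      (OmegaSet U) := fun w hw => hw
  have hφ : ContDiff ℝ (⊤ : ℕ∞)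
      (fun w : EuclideanSpace ℝ (Fin p) × EuclideanSpace ℝ (Fin q) => (w.1, w.2, t₀)) :=
    contDiff_fst.prodMk (contDiff_snd.prodMk contDiff_const)
  refine ⟨hsmooth.comp hφ.contDiffOn hmaps, ?_⟩
  set Kt : Set (EuclideanSpace ℝ (Fin p) × EuclideanSpace ℝ (Fin q)) :=
    (fun u : EuclideanSpace ℝ (Fin p) × EuclideanSpace ℝ (Fin q) => (u, t₀)) ⁻¹' K with hKt_def
  have hKt_closed : IsClosed Kt :=
    hKc.isClosed.preimage (continuous_id.prodMk continuous_const)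
  have hKt_sub : Kt ⊆ Prod.fst '' K := fun u hu => ⟨(u, t₀), hu, rfl⟩
  have hKt : IsCompact Kt :=
    (hKc.image continuous_fst).of_isClosed_subset hKt_closed hKt_sub
  set C : Set (EuclideanSpace ℝ (Fin p) × EuclideanSpace ℝ (Fin q)) :=
    (fun u : EuclideanSpace ℝ (Fin p) × EuclideanSpace ℝ (Fin q) => (u.1, t₀⁻¹ • u.2)) '' Kt
    with hC_def
  have hC : IsCompact C := hKt.image
    (continuous_fst.prodMk ((continuous_const_smul t₀⁻¹).comp continuous_snd))
  have hCsub : C ⊆ {w : EuclideanSpace ℝ (Fin p) × EuclideanSpace ℝ (Fin q) |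
      (w.1, t₀ • w.2) ∈ U} := by
    rintro w ⟨u, hu, rfl⟩
    have huU : u ∈ U := (hKU hu).1
    show ((u.1, t₀ • t₀⁻¹ • u.2)) ∈ U
    rw [smul_smul, mul_inv_cancel₀ ht₀, one_smul]
    exact huU
  have hSsub : {w : EuclideanSpace ℝ (Fin p) × EuclideanSpace ℝ (Fin q) |
      (w.1, t₀ • w.2) ∈ U ∧ g (w.1, w.2, t₀) ≠ 0} ⊆ C := by
    rintro ⟨x, ξ⟩ ⟨hwU, hwg⟩
    have hz : ((x, ξ, t₀) : EuclideanSpace ℝ (Fin p) × EuclideanSpace ℝ (Fin q) × ℝ) ∈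
        OmegaSet U := hwU
    have hK : ((x, t₀ • ξ), t₀) ∈ K := by
      by_contra h
      exact hwg (hKsupp _ hz h)
    refine ⟨(x, t₀ • ξ), hK, ?_⟩
    simp only [smul_smul, inv_mul_cancel₀ ht₀, one_smul]
  have hclsub : closure {w : EuclideanSpace ℝ (Fin p) × EuclideanSpace ℝ (Fin q) |
      (w.1, t₀ • w.2) ∈ U ∧ g (w.1, w.2, t₀) ≠ 0} ⊆ C :=
    closure_minimal hSsub hC.isClosed
  exact ⟨hC.of_isClosed_subset isClosed_closure hclsub, hclsub.trans hCsub⟩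
end
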